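/- Let R be a commutative ring and B = R[z₁,...,z_u]/(z₁²,...,z_u²), graded by putting each z_i in degree −2. The R-linear map B[2u] → Hom_R(B, R) sending z_S[2u] to the dual basis element (z_{S̄})^∨ of the complement S̄ of S is an isomorphism of modules over the divided power algebra Γ_R(y), where y acts on B by multiplication by z₁+⋯+z_u and acts on Hom_R(B,R) by precomposition. -/

import Mathlib

/-! The ideal `(z_i²)` is spanned by the monomials that are not square-free, a complement of the
span of the square-free ones, so the classes `z_S` form a basis of `B`. Since `z_S z_T` is
`z_{S ∪ T}` or `0` according as `S` and `T` are disjoint or not, the map `z_S ↦ (z_{S̄})^∨` is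
`x ↦ (y ↦ coefficient of z_{1…u} in x y)`, and a pairing of the form `(x, y) ↦ φ (x y)` satisfies
`⟨c x, y⟩ = ⟨x, c y⟩` for every `c ∈ B`, in particular for `c = y^{[k]}`. -/

open Finset

noncomputable section

/-- `B R u = R[z₁,…,z_u]/(z₁²,…,z_u²)`. -/
abbrev SqZeroAlg (R : Type*) [CommRing R] (u : ℕ) : Type _ :=
  MvPolynomial (Fin u) R ⧸
    Ideal.span (Set.range fun i : Fin u => (MvPolynomial.X i : MvPolynomial (Fin u) R) ^ 2)

def zvar (R : Type*) [CommRing R] (u : ℕ) (i : Fin u) : SqZeroAlg R u :=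
  Ideal.Quotient.mk _ (MvPolynomial.X i)

def zmon (R : Type*) [CommRing R] (u : ℕ) (S : Finset (Fin u)) : SqZeroAlg R u :=
  ∏ i ∈ S, zvar R u i

/-- `y^{[k]} = Σ_{|S|=k} z_S`, through which the divided power algebra `Γ_R(y)`
acts on `B R u`. -/
def ysym (R : Type*) [CommRing R] (u : ℕ) (k : ℕ) : SqZeroAlg R u :=
  ∑ S ∈ Finset.powersetCard k (Finset.univ : Finset (Fin u)), zmon R u S

namespace MvPolynomial

variable {R σ : Type*} [CommRing R]

lemma coe_basisRestrictSupport_apply (s : Set (σ →₀ ℕ)) (a : s) :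
    (basisRestrictSupport R s a : MvPolynomial σ R) = monomial a 1 := by
  classical
  suffices basisRestrictSupport R s a = ⟨monomial a 1, by simp⟩ by rw [this]
  rw [Module.Basis.apply_eq_iff]
  ext b
  -- the basis is stated for `AddMonoidAlgebra.supported`, whose `coeff` is `MvPolynomial.coeff`
  erw [AddMonoidAlgebra.supportedEquivFinsupp_apply_apply]
  change coeff _ _ = _
  rw [coeff_monomial, Finsupp.single_apply]
  exact if_congr Subtype.ext_iff.symm rfl rfl

lemma isCompl_restrictSupport_compl (s : Set (σ →₀ ℕ)) :
    IsCompl (restrictSupport R sᶜ) (restrictSupport R s) := by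
  rw [restrictSupport, restrictSupport, AddMonoidAlgebra.supported_eq_map,
    AddMonoidAlgebra.supported_eq_map]
  exact (Submodule.orderIsoMapComap _).isCompl_iff.mp
    ⟨Finsupp.disjoint_supported_supported isCompl_compl.symm.disjoint,
      Finsupp.codisjoint_supported_supported isCompl_compl.symm.codisjoint⟩

variable (σ) in
def squarefreeExponents : Set (σ →₀ ℕ) := {a | ∀ i, a i ≤ 1}

lemma mem_span_range_X_sq_iff {p : MvPolynomial σ R} :
    p ∈ Ideal.span (Set.range fun i : σ => (X i : MvPolynomial σ R) ^ 2) ↔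
      ↑p.support ⊆ (squarefreeExponents σ)ᶜ := by
  have hgen : (Set.range fun i : σ => (X i : MvPolynomial σ R) ^ 2) =
      (fun a => monomial a (1 : R)) '' Set.range fun i => Finsupp.single i 2 := by
    rw [← Set.range_comp]
    simp only [Function.comp_def, X_pow_eq_monomial]
  rw [hgen, mem_ideal_span_monomial_image]
  simp [Set.subset_def, squarefreeExponents, Finsupp.single_le_iff, Nat.lt_iff_add_one_le]

lemma isCompl_span_range_X_sq :
    IsCompl ((Ideal.span (Set.range fun i : σ => (X i : MvPolynomial σ R) ^ 2)).restrictScalars R)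
      (restrictSupport R (squarefreeExponents σ)) := by
  convert isCompl_restrictSupport_compl (R := R) (squarefreeExponents σ)
  ext p
  exact mem_span_range_X_sq_iff

variable [DecidableEq σ]

def finsetEquivSquarefreeExponents : Finset σ ≃ squarefreeExponents σ where
  toFun S := ⟨Multiset.toFinsupp S.val, Multiset.nodup_iff_count_le_one.mp S.nodup⟩
  invFun a := ⟨Finsupp.toMultiset a.1,
    Multiset.nodup_iff_count_le_one.mpr fun i => by simpa using a.2 i⟩
  left_inv S := by simp
  right_inv a := by simp

lemma monomial_toFinsupp_val (S : Finset σ) :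
    monomial (Multiset.toFinsupp S.val) (1 : R) = ∏ i ∈ S, X i := by
  rw [← prod_X_pow_eq_monomial, Multiset.toFinsupp_support, Finset.val_toFinset]
  refine Finset.prod_congr rfl fun i hi => ?_
  rw [Multiset.toFinsupp_apply, Multiset.count_eq_one_of_mem S.nodup hi, pow_one]

variable (R σ) in
def squarefreeBasis :
    Module.Basis (Finset σ) R
      (MvPolynomial σ R ⧸ Ideal.span (Set.range fun i : σ => (X i : MvPolynomial σ R) ^ 2)) :=
  ((basisRestrictSupport R _).map
      ((Submodule.quotientEquivOfIsCompl _ _ isCompl_span_range_X_sq).symm ≪≫ₗ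
        Submodule.Quotient.restrictScalarsEquiv R _)).reindex
    finsetEquivSquarefreeExponents.symm

lemma squarefreeBasis_apply (S : Finset σ) :
    squarefreeBasis R σ S = Ideal.Quotient.mk _ (∏ i ∈ S, X i) := by
  rw [squarefreeBasis, Module.Basis.reindex_apply, Module.Basis.map_apply, LinearEquiv.trans_apply,
    Submodule.quotientEquivOfIsCompl_symm_apply, Submodule.Quotient.restrictScalarsEquiv_mk,
    Equiv.symm_symm, coe_basisRestrictSupport_apply, ← monomial_toFinsupp_val]
  rfl

lemma squarefreeBasis_mul (S T : Finset σ) :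
    squarefreeBasis R σ S * squarefreeBasis R σ T =
      if Disjoint S T then squarefreeBasis R σ (S ∪ T) else 0 := by
  simp only [squarefreeBasis_apply, ← map_mul]
  split_ifs with h
  · rw [Finset.prod_union h]
  · obtain ⟨i, hiS, hiT⟩ := Finset.not_disjoint_iff.mp h
    rw [← Finset.mul_prod_erase S _ hiS, ← Finset.mul_prod_erase T _ hiT, mul_mul_mul_comm,
      ← sq, Ideal.Quotient.eq_zero_iff_mem]
    exact Ideal.mul_mem_right _ _ (Ideal.subset_span ⟨i, rfl⟩)

end MvPolynomial

namespace Module.Basis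

variable {R A σ : Type*} [CommRing R] [CommRing A] [Algebra R A] [Fintype σ] [DecidableEq σ]
  (b : Basis (Finset σ) R A)

def complDualEquiv : A ≃ₗ[R] Module.Dual R A :=
  b.equiv b.dualBasis (compl_involutive.toPerm _)

lemma complDualEquiv_apply_self (S : Finset σ) : b.complDualEquiv (b S) = b.dualBasis Sᶜ :=
  b.equiv_apply _ _ _

variable {b}

lemma complDualEquiv_apply
    (hb : ∀ S T, b S * b T = if Disjoint S T then b (S ∪ T) else 0) (x y : A) :
    b.complDualEquiv x y = b.coord univ (x * y) := by
  suffices b.complDualEquiv.toLinearMap = (LinearMap.mul R A).compr₂ (b.coord univ) from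
    LinearMap.congr_fun₂ this x y
  refine b.ext fun S => b.ext fun T => ?_
  simp only [LinearEquiv.coe_coe, complDualEquiv_apply_self, dualBasis_apply_self,
    LinearMap.compr₂_apply, LinearMap.mul_apply', hb, coord_apply]
  have hcompl : T = Sᶜ ↔ Disjoint S T ∧ S ∪ T = univ := by
    rw [eq_compl_iff_isCompl, isCompl_comm, isCompl_iff, codisjoint_iff, sup_eq_union,
      top_eq_univ]
  by_cases hST : Disjoint S T <;> simp [hST, hcompl, Finsupp.single_apply, eq_comm]

lemma complDualEquiv_mul_apply
    (hb : ∀ S T, b S * b T = if Disjoint S T then b (S ∪ T) else 0) (c x y : A) :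
    b.complDualEquiv (c * x) y = b.complDualEquiv x (c * y) := by
  rw [complDualEquiv_apply hb, complDualEquiv_apply hb, mul_assoc, mul_left_comm]

end Module.Basis

/-- **Poincaré duality for `B R u`.**  The square-free monomials `z_S` form an `R`-basis
of `B R u`, and the `R`-linear map `B R u → Hom_R(B R u, R)` sending `z_S` to the dual
basis element `(z_{S̄})^∨` of the complementary monomial is an isomorphism of
`Γ_R(y)`-modules, where `y^{[k]}` acts on `B R u` by multiplication by
`Σ_{|S|=k} z_S` and on the dual by precomposition with that multiplication.
(This realises the graded isomorphism `(B_u^R)^∨ ≅ B_u^R[2u]`.) -/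
theorem statement7 (R : Type*) [CommRing R] (u : ℕ) :
    ∃ bB : Module.Basis (Finset (Fin u)) R (SqZeroAlg R u),
      (∀ S : Finset (Fin u), bB S = zmon R u S) ∧
      ∃ e : SqZeroAlg R u ≃ₗ[R] Module.Dual R (SqZeroAlg R u),
        (∀ S : Finset (Fin u), e (zmon R u S) = bB.dualBasis Sᶜ) ∧
        (∀ (k : ℕ) (b x : SqZeroAlg R u),
          e (ysym R u k * b) x = e b (ysym R u k * x)) := by
  let bB := MvPolynomial.squarefreeBasis R (Fin u)
  have hzmon (S : Finset (Fin u)) : bB S = zmon R u S := by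
    rw [MvPolynomial.squarefreeBasis_apply, map_prod]
    rfl
  refine ⟨bB, hzmon, bB.complDualEquiv, fun S => ?_, fun k b x => ?_⟩
  · rw [← hzmon, Module.Basis.complDualEquiv_apply_self]
  · exact Module.Basis.complDualEquiv_mul_apply (b := bB) MvPolynomial.squarefreeBasis_mul
      (ysym R u k) b x
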